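/- arXiv:0802.2918 — 5 statements merged into one kernel-verified Lean document; each statement's English description precedes it below -/
import Mathlib

section
/- Let k be a field of characteristic p > 0, V a finite-dimensional k[t]/(t^p)-module, and for 1 ≤ j ≤ p−1 set V^{[j]} = Ker(t^j : V → V) / Im(t^{p−j} : V → V). Then V^{[j]} and V^{[p−j]} have the same dimension over k. -/
/-!
Since `t ^ p = 0`, the image of `t ^ (p - j)` lies in the kernel of `t ^ j`, so by rank–nullity
`dim V^[j] = dim V - rank (t ^ j) - rank (t ^ (p - j))`, an expression symmetric in `j` and `p - j`.
-/

namespace Module.End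

variable {K V : Type*} [DivisionRing K] [AddCommGroup V] [Module K V]

theorem range_pow_le_ker_pow (f : Module.End K V) {c d : ℕ} (h : f ^ (c + d) = 0) :
    LinearMap.range (f ^ d) ≤ LinearMap.ker (f ^ c) := by
  rintro _ ⟨y, rfl⟩
  rw [LinearMap.mem_ker, ← Module.End.mul_apply, ← pow_add, h, LinearMap.zero_apply]

theorem finrank_ker_pow_quotient_range_pow_add [FiniteDimensional K V] (f : Module.End K V)
    {c d : ℕ} (h : f ^ (c + d) = 0) :
    Module.finrank K
        (↥(LinearMap.ker (f ^ c)) ⧸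
          (LinearMap.range (f ^ d)).comap (LinearMap.ker (f ^ c)).subtype)
      + Module.finrank K (LinearMap.range (f ^ c)) + Module.finrank K (LinearMap.range (f ^ d))
      = Module.finrank K V := by
  rw [← LinearEquiv.finrank_eq (Submodule.comapSubtypeEquivOfLe (range_pow_le_ker_pow f h)),
    add_right_comm, Submodule.finrank_quotient_add_finrank, add_comm,
    LinearMap.finrank_range_add_finrank_ker]

end Module.End

theorem stmt7_general {k : Type*} [Field k] {p : ℕ}
    {V : Type*} [AddCommGroup V] [Module k V] [FiniteDimensional k V]
    (f : Module.End k V) (hf : f ^ p = 0)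
    (j : ℕ) (hj2 : j ≤ p - 1) :
    Module.finrank k
        (↥(LinearMap.ker (f ^ j)) ⧸
          (LinearMap.range (f ^ (p - j))).comap (LinearMap.ker (f ^ j)).subtype) =
      Module.finrank k
        (↥(LinearMap.ker (f ^ (p - j))) ⧸
          (LinearMap.range (f ^ j)).comap (LinearMap.ker (f ^ (p - j))).subtype) := by
  have hjp : j + (p - j) = p := Nat.add_sub_cancel' (hj2.trans (Nat.sub_le p 1))
  have hj := f.finrank_ker_pow_quotient_range_pow_add (c := j) (d := p - j) (by rwa [hjp])
  have hpj := f.finrank_ker_pow_quotient_range_pow_add (c := p - j) (d := j)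
    (by rwa [add_comm, hjp])
  omega

theorem stmt7 {k : Type*} [Field k] {p : ℕ} [Fact p.Prime] [CharP k p]
    {V : Type*} [AddCommGroup V] [Module k V] [FiniteDimensional k V]
    (f : Module.End k V) (hf : f ^ p = 0)
    (j : ℕ) (hj1 : 1 ≤ j) (hj2 : j ≤ p - 1) :
    Module.finrank k
        (↥(LinearMap.ker (f ^ j)) ⧸
          (LinearMap.range (f ^ (p - j))).comap (LinearMap.ker (f ^ j)).subtype) =
      Module.finrank k
        (↥(LinearMap.ker (f ^ (p - j))) ⧸
          (LinearMap.range (f ^ j)).comap (LinearMap.ker (f ^ (p - j))).subtype) :=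
  stmt7_general f hf j hj2
end

section
/- Let R be a commutative local ring with residue field k, let p ≥ 1, and let M be a finitely generated module over R[t]/(t^p) which is free as an R-module. If M ⊗_R k is free as a k[t]/(t^p)-module, then M is free as an R[t]/(t^p)-module. -/
/-!
Lift the generators `b i` of `k ⊗ M` over `k[t]/(t^p)` to `M`. The family `f^j (b i)` then reduces
to a `k`-basis of `k ⊗ M`, so it spans `M` by Nakayama's lemma, and it is linearly independent
because `M` is flat over the local ring `R`.
-/

open TensorProduct

/-- A module `M` over a commutative ring `R`, equipped with an `R`-linear
endomorphism `f` (thought of as the action of `t`, with `f ^ p = 0`), is free as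
a module over `R[t]/(t^p)` iff there is a family `b : ι → M` such that the
elements `f^j (b i)`, `0 ≤ j < p`, form an `R`-basis of `M`. -/
def IsFreeTrunc (R : Type*) [CommRing R] {M : Type*} [AddCommGroup M] [Module R M]
    (p : ℕ) (f : Module.End R M) : Prop :=
  ∃ (ι : Type) (b : ι → M) (B : Module.Basis (ι × Fin p) R M),
    ∀ (i : ι) (j : Fin p), B (i, j) = (f ^ (j : ℕ)) (b i)

open IsLocalRing

theorem IsLocalRing.exists_basis_of_tmul_eq_basis {R M : Type*} [CommRing R] [IsLocalRing R]
    [AddCommGroup M] [Module R M] [Module.Finite R M] [Module.Flat R M] {ι : Type*}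
    (v : ι → M) (B : Module.Basis ι (ResidueField R) (ResidueField R ⊗[R] M))
    (hv : ∀ i, 1 ⊗ₜ v i = B i) : ∃ C : Module.Basis ι R M, ⇑C = v := by
  have hli : LinearIndependent R v :=
    Module.IsLocalRing.linearIndependent_of_flat v
      (by convert B.linearIndependent using 1; ext i; exact hv i)
  exact ⟨.mk hli (span_eq_top_of_tmul_eq_basis v B hv).ge, Module.Basis.coe_mk _ _⟩

theorem LinearMap.baseChange_pow_tmul {R A M : Type*} [CommRing R] [CommRing A] [Algebra R A]
    [AddCommGroup M] [Module R M] (f : Module.End R M) (n : ℕ) (a : A) (m : M) :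
    (f.baseChange A ^ n) (a ⊗ₜ m) = a ⊗ₜ (f ^ n) m := by
  rw [← LinearMap.baseChange_pow, LinearMap.baseChange_tmul]

theorem IsFreeTrunc.of_baseChange_residueField {R M : Type*} [CommRing R] [IsLocalRing R]
    [AddCommGroup M] [Module R M] [Module.Finite R M] [Module.Flat R M] {p : ℕ}
    {f : Module.End R M} (h : IsFreeTrunc (ResidueField R) p (f.baseChange (ResidueField R))) :
    IsFreeTrunc R p f := by
  obtain ⟨ι, b, B, hB⟩ := h
  choose b' hb' using fun i ↦ mk_surjective R M (ResidueField R) residue_surjective (b i)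
  obtain ⟨C, hC⟩ := exists_basis_of_tmul_eq_basis (fun x : ι × Fin p ↦ (f ^ (x.2 : ℕ)) (b' x.1)) B
    fun x ↦ by rw [hB, ← hb', mk_apply, LinearMap.baseChange_pow_tmul]
  exact ⟨ι, b', C, fun i j ↦ congrFun hC (i, j)⟩

theorem stmt9_general {R : Type*} [CommRing R] [IsLocalRing R] {p : ℕ}
    {M : Type*} [AddCommGroup M] [Module R M] [Module.Finite R M] [Module.Free R M]
    (f : Module.End R M)
    (h : IsFreeTrunc (IsLocalRing.ResidueField R) p
      (LinearMap.baseChange (IsLocalRing.ResidueField R) f)) :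
    IsFreeTrunc R p f :=
  h.of_baseChange_residueField

theorem stmt9 {R : Type*} [CommRing R] [IsLocalRing R] {p : ℕ} (hp : 1 ≤ p)
    {M : Type*} [AddCommGroup M] [Module R M] [Module.Finite R M] [Module.Free R M]
    (f : Module.End R M) (hf : f ^ p = 0)
    (h : IsFreeTrunc (IsLocalRing.ResidueField R) p
      (LinearMap.baseChange (IsLocalRing.ResidueField R) f)) :
    IsFreeTrunc R p f :=
  stmt9_general f h
end

section
/- Let R be a reduced commutative local Noetherian ring and M a finitely generated R-module. If the function p ↦ dim_{κ(p)} (M ⊗_R κ(p)) is constant as p ranges over all prime ideals of R (where κ(p) is the residue field at p), then M is a free R-module. -/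
/-!
Lifting a basis of `k ⊗ M` (`k` the residue field) gives, by Nakayama, a surjection
`f : Rⁿ → M`. At every prime `p` the fiber `κ(p)ⁿ → κ(p) ⊗ M` of `f` is a surjection between
spaces of the same dimension `n`, hence injective, so the coordinates of every `x ∈ ker f` lie in
every prime. They are therefore nilpotent, hence zero since `R` is reduced.
-/

open TensorProduct IsLocalRing Module

theorem IsLocalRing.finrank_tensorProduct_of_isIntegral {R : Type*} [CommRing R] [IsLocalRing R]
    (M : Type*) [AddCommGroup M] [Module R M] (k : Type*) [Field k] [Algebra R k]
    [Algebra.IsIntegral R k] :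
    finrank k (k ⊗[R] M) = finrank (ResidueField R) (ResidueField R ⊗[R] M) := by
  rw [← (AlgebraTensorModule.cancelBaseChange R (ResidueField R) k k M).finrank_eq,
    finrank_baseChange]

theorem IsLocalRing.exists_linearMap_surjective_of_finrank_residueField {R : Type*} [CommRing R]
    [IsLocalRing R] (M : Type*) [AddCommGroup M] [Module R M] [Module.Finite R M] {n : ℕ}
    (hn : finrank (ResidueField R) (ResidueField R ⊗[R] M) = n) :
    ∃ f : (Fin n → R) →ₗ[R] M, Function.Surjective f := by
  let b := finBasisOfFinrankEq (ResidueField R) (ResidueField R ⊗[R] M) hn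
  choose v hv using TensorProduct.mk_surjective R M (ResidueField R) Ideal.Quotient.mk_surjective
  refine ⟨Fintype.linearCombination R (v ∘ b), ?_⟩
  rw [← LinearMap.range_eq_top, Fintype.range_linearCombination]
  exact span_eq_top_of_tmul_eq_basis (v ∘ b) b fun _ ↦ hv _

theorem LinearMap.baseChange_injective_of_surjective_of_finrank_eq {R : Type*} [CommRing R]
    {ι M : Type*} [Fintype ι] [AddCommGroup M] [Module R M] (k : Type*) [Field k] [Algebra R k]
    (f : (ι → R) →ₗ[R] M) (hf : Function.Surjective f)
    (hk : finrank k (k ⊗[R] M) = Fintype.card ι) :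
    Function.Injective (f.baseChange k) := by
  classical
  have hsurj : Function.Surjective (f.baseChange k) := f.lTensor_surjective k hf
  have : Module.Finite k (k ⊗[R] M) := .of_surjective _ hsurj
  have hrank : finrank k (k ⊗[R] (ι → R)) = finrank k (k ⊗[R] M) := by
    rw [hk, (piScalarRight R k k ι).finrank_eq, finrank_fintype_fun_eq_card]
  exact (injective_iff_surjective_of_finrank_eq_finrank hrank).mpr hsurj

theorem LinearMap.injective_of_surjective_of_finrank_fiber_eq {R : Type*} [CommRing R]
    [IsReduced R] {ι M : Type*} [Fintype ι] [AddCommGroup M] [Module R M]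
    (f : (ι → R) →ₗ[R] M) (hf : Function.Surjective f)
    (h : ∀ p : PrimeSpectrum R,
      finrank p.asIdeal.ResidueField (p.asIdeal.Fiber M) = Fintype.card ι) :
    Function.Injective f := by
  classical
  refine (injective_iff_map_eq_zero f).mpr fun x hx ↦ funext fun j ↦ ?_
  have hmem : ∀ p : Ideal R, p.IsPrime → x j ∈ p := by
    intro p hp
    have hfiber : (1 : p.ResidueField) ⊗ₜ[R] x = 0 :=
      f.baseChange_injective_of_surjective_of_finrank_eq _ hf (h ⟨p, hp⟩)
        (by rw [baseChange_tmul, hx, tmul_zero, map_zero])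
    have hcoord := congrFun (congrArg (piScalarRight R p.ResidueField p.ResidueField ι) hfiber) j
    simpa [Algebra.smul_def] using hcoord
  exact (nilpotent_iff_mem_prime.mpr hmem).eq_zero

theorem stmt10_general {R : Type*} [CommRing R] [IsLocalRing R]
    [IsReduced R] {M : Type*} [AddCommGroup M] [Module R M] [Module.Finite R M]
    (n : ℕ)
    (h : ∀ P : PrimeSpectrum R,
      Module.finrank (IsLocalRing.ResidueField (Localization.AtPrime P.asIdeal))
        (IsLocalRing.ResidueField (Localization.AtPrime P.asIdeal) ⊗[R] M) = n) :
    Module.Free R M := by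
  have hclosed : finrank (ResidueField R) (ResidueField R ⊗[R] M) = n := by
    rw [← finrank_tensorProduct_of_isIntegral M (maximalIdeal R).ResidueField]
    exact h ⟨maximalIdeal R, inferInstance⟩
  obtain ⟨f, hf⟩ := exists_linearMap_surjective_of_finrank_residueField M hclosed
  have hinj : Function.Injective f :=
    f.injective_of_surjective_of_finrank_fiber_eq hf fun p ↦
      (h p).trans (Fintype.card_fin n).symm
  exact .of_equiv (LinearEquiv.ofBijective f ⟨hinj, hf⟩)

theorem stmt10 {R : Type*} [CommRing R] [IsLocalRing R] [IsNoetherianRing R]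
    [IsReduced R] {M : Type*} [AddCommGroup M] [Module R M] [Module.Finite R M]
    (n : ℕ)
    (h : ∀ P : PrimeSpectrum R,
      Module.finrank (IsLocalRing.ResidueField (Localization.AtPrime P.asIdeal))
        (IsLocalRing.ResidueField (Localization.AtPrime P.asIdeal) ⊗[R] M) = n) :
    Module.Free R M :=
  stmt10_general n h
end

section
/- Let V and W be vector spaces over a field k, let v_1, …, v_r be a basis of V and w_1, …, w_s a basis of W, and let v ∈ V, w ∈ W be arbitrary vectors. Then the span X ⊆ V ⊕ W of the vectors (v_1, w), …, (v_r, w), (v, w_1), …, (v, w_s) has dimension at least r + s − 1. -/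
/-!
Adjoining the single vector `(v, 0)` to `X` gives all of `V × W`: subtracting it from the
`(v, w_j)` yields `0 × W`, and then subtracting `(0, w)` from the `(v_i, w)` yields `V × 0`.
Adjoining one vector raises the dimension by at most one, so `dim X ≥ r + s - 1`.
-/

open Module Submodule Set

theorem Submodule.finrank_sup_span_singleton_le {K V : Type*} [DivisionRing K] [AddCommGroup V]
    [Module K V] (X : Submodule K V) [FiniteDimensional K X] (z : V) :
    finrank K ↥(X ⊔ K ∙ z) ≤ finrank K X + 1 :=
  (finrank_add_le_finrank_add_finrank X _).trans <|
    Nat.add_le_add_left ((finrank_span_le_card {z}).trans (by simp)) _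

theorem span_prod_sup_span_singleton_eq_top {R V W ι κ : Type*} [Ring R] [AddCommGroup V]
    [Module R V] [AddCommGroup W] [Module R W] {f : ι → V} {g : κ → W}
    (hf : span R (range f) = ⊤) (hg : span R (range g) = ⊤) (v : V) (w : W) :
    span R ((range fun i => (f i, w)) ∪ range fun j => (v, g j)) ⊔ R ∙ (v, 0) = ⊤ := by
  set Y := span R ((range fun i => (f i, w)) ∪ range fun j => (v, g j)) ⊔ R ∙ (v, 0)
  have hv : ((v, 0) : V × W) ∈ Y := mem_sup_right (mem_span_singleton_self _)
  have hinr : LinearMap.range (LinearMap.inr R V W) ≤ Y := by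
    rw [LinearMap.range_eq_map, ← hg, map_span, ← range_comp, span_le]
    rintro _ ⟨j, rfl⟩
    have hvg : ((v, g j) : V × W) ∈ Y := mem_sup_left (subset_span (Or.inr ⟨j, rfl⟩))
    simpa using sub_mem hvg hv
  have hinl : LinearMap.range (LinearMap.inl R V W) ≤ Y := by
    rw [LinearMap.range_eq_map, ← hf, map_span, ← range_comp, span_le]
    rintro _ ⟨i, rfl⟩
    have hfw : ((f i, w) : V × W) ∈ Y := mem_sup_left (subset_span (Or.inl ⟨i, rfl⟩))
    simpa using sub_mem hfw (hinr ⟨w, rfl⟩)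
  rw [eq_top_iff, ← LinearMap.sup_range_inl_inr]
  exact sup_le hinl hinr

theorem stmt11 {k V W : Type*} [Field k] [AddCommGroup V] [Module k V]
    [AddCommGroup W] [Module k W] {r s : ℕ}
    (bV : Module.Basis (Fin r) k V) (bW : Module.Basis (Fin s) k W) (v : V) (w : W) :
    r + s - 1 ≤
      Module.finrank k
        ↥(Submodule.span k
          ((Set.range fun i => ((bV i, w) : V × W)) ∪
            (Set.range fun j => ((v, bW j) : V × W)))) := by
  have : Module.Finite k V := .of_basis bV
  have : Module.Finite k W := .of_basis bW
  have hdim : finrank k (V × W) = r + s := by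
    rw [finrank_prod, finrank_eq_card_basis bV, finrank_eq_card_basis bW,
      Fintype.card_fin, Fintype.card_fin]
  have hle := finrank_sup_span_singleton_le
    (span k ((range fun i => ((bV i, w) : V × W)) ∪ range fun j => ((v, bW j) : V × W))) (v, 0)
  rw [span_prod_sup_span_singleton_eq_top bV.span_eq bW.span_eq, finrank_top, hdim] at hle
  omega
end

section
/- Let k be a field of characteristic p > 0, let 0 ≤ m ≤ p−1, and let V_m be the (m+1)-dimensional k-vector space with basis v_0, …, v_m. Define operators e, f, h on V_m by e·v_i = (i+1)v_{i+1} (with e·v_m = 0), f·v_i = (m−i+1)v_{i−1} (with f·v_0 = 0), and h·v_i = (2i−m)v_i. Let Θ = s²·e − t²·f + st·h acting k[s,t]-linearly on V_m ⊗_k k[s,t]. Then the element w_m = Σ_{i=0}^{m} (−1)^i s^i t^{m−i} (v_i ⊗ 1) satisfies Θ(w_m) = 0. -/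
/-! Each of the three terms of `(Θ w)_i` is a multiple of `(-1)^i s^(i+1) t^(m-i+1)`, with
coefficients `-i`, `m - i` and `2i - m`, which sum to zero. -/

noncomputable section

/-- The operator `Θ = s²·e − t²·f + st·h` acting `k[s,t]`-linearly on
`V_m ⊗_k k[s,t]`, where `V_m` has basis `v_0, …, v_m` and
`e ⬝ v_i = (i+1) v_{i+1}` (`e ⬝ v_m = 0`), `f ⬝ v_i = (m−i+1) v_{i−1}`
(`f ⬝ v_0 = 0`), `h ⬝ v_i = (2i−m) v_i`.  In coordinates, the `v_i`-component of
`Θ w` is `s² · i · w_{i−1} − t² · (m−i) · w_{i+1} + st · (2i−m) · w_i`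
(the boundary cases being forced by the vanishing coefficients).
Here `s = X 0`, `t = X 1` in `k[s,t] = MvPolynomial (Fin 2) k`. -/
def thetaSL2 (k : Type*) [Field k] (m : ℕ) :
    (Fin (m + 1) → MvPolynomial (Fin 2) k) →ₗ[MvPolynomial (Fin 2) k]
      (Fin (m + 1) → MvPolynomial (Fin 2) k) where
  toFun w := fun i =>
    MvPolynomial.X 0 ^ 2 *
        (((i : ℕ) : MvPolynomial (Fin 2) k) *
          w ⟨(i : ℕ) - 1, by have := i.isLt; omega⟩) -
      MvPolynomial.X 1 ^ 2 *
        (((m - (i : ℕ) : ℕ) : MvPolynomial (Fin 2) k) *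
          w ⟨min ((i : ℕ) + 1) m, by omega⟩) +
      (MvPolynomial.X 0 * MvPolynomial.X 1) *
        ((((2 * (i : ℕ) : ℕ) : MvPolynomial (Fin 2) k) - ((m : ℕ) : MvPolynomial (Fin 2) k)) * w i)
  map_add' a b := by funext i; simp; ring
  map_smul' c a := by funext i; simp; ring

section SignedMonomials

variable {R : Type*} [CommRing R] (s t : R) {m i : ℕ}

/-- The coordinates `(-1)^i s^i t^(m-i)` of `w_m`. -/
abbrev signedMonomial (m i : ℕ) : R := (-1) ^ i * s ^ i * t ^ (m - i)

theorem sq_mul_cast_mul_signedMonomial_pred (hi : i ≤ m) :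
    s ^ 2 * ((i : R) * signedMonomial s t m (i - 1)) =
      -((i : R) * ((-1) ^ i * s ^ (i + 1) * t ^ (m - i + 1))) := by
  rcases i with _ | i
  · simp
  · obtain ⟨j, rfl⟩ : ∃ j, m = i + 1 + j := ⟨m - (i + 1), by omega⟩
    simp only [signedMonomial, Nat.add_sub_cancel, show i + 1 + j - i = j + 1 by omega,
      show i + 1 + j - (i + 1) = j by omega]
    ring

theorem sq_mul_cast_mul_signedMonomial_succ (hi : i ≤ m) :
    t ^ 2 * (((m - i : ℕ) : R) * signedMonomial s t m (min (i + 1) m)) =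
      -(((m - i : ℕ) : R) * ((-1) ^ i * s ^ (i + 1) * t ^ (m - i + 1))) := by
  rcases hi.lt_or_eq with hlt | rfl
  · obtain ⟨j, rfl⟩ : ∃ j, m = i + 1 + j := ⟨m - (i + 1), by omega⟩
    simp only [signedMonomial, min_eq_left (Nat.le_add_right _ _),
      show i + 1 + j - i = j + 1 by omega, show i + 1 + j - (i + 1) = j by omega]
    ring
  · simp

theorem mul_mul_signedMonomial (c : R) :
    s * t * (c * signedMonomial s t m i) = c * ((-1) ^ i * s ^ (i + 1) * t ^ (m - i + 1)) := by
  ring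

end SignedMonomials

theorem stmt14_general {k : Type*} [Field k]
    (m : ℕ) :
    thetaSL2 k m
        (fun i => (-1) ^ (i : ℕ) * MvPolynomial.X 0 ^ (i : ℕ) *
          MvPolynomial.X 1 ^ (m - (i : ℕ))) = 0 := by
  funext ⟨i, hi_lt⟩
  have hi : i ≤ m := Nat.lt_succ_iff.mp hi_lt
  simp only [thetaSL2, LinearMap.coe_mk, AddHom.coe_mk, Pi.zero_apply]
  rw [sq_mul_cast_mul_signedMonomial_pred _ _ hi, sq_mul_cast_mul_signedMonomial_succ _ _ hi,
    mul_mul_signedMonomial, Nat.cast_sub hi]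
  push_cast
  ring

theorem stmt14 {k : Type*} [Field k] {p : ℕ} [Fact p.Prime] [CharP k p]
    (m : ℕ) (hm : m ≤ p - 1) :
    thetaSL2 k m
        (fun i => (-1) ^ (i : ℕ) * MvPolynomial.X 0 ^ (i : ℕ) *
          MvPolynomial.X 1 ^ (m - (i : ℕ))) = 0 :=
  stmt14_general m

end
end
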